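/- Let D be a nonempty compact convex subset of ℝ^{d×m}, let F : ℝ^{d×m} → ℝ be convex and differentiable, let C_F ≥ 0 be a curvature bound for F on D, and let δ ≥ 0. Let (W^t)_{t≥0} be a D-valued stochastic process with W⁰ ∈ D deterministic and, for each t ≥ 0, W^{t+1} = W^t + γ^t (Ŝ^t − W^t) with step size γ^t = 2/(t+2), where Ŝ^t is a D-valued random matrix whose conditional expectation given W^t satisfies ⟨E[Ŝ^t | W^t], ∇F(W^t)⟩ ≤ min_{S ∈ D} ⟨S, ∇F(W^t)⟩ + (1/2) δ γ^t C_F. Then for every t ≥ 1, E[F(W^t)] − F(W*) ≤ (2 C_F / (t+2)) (1 + δ), where W* is any minimizer of F over D. -/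

import Mathlib

open Matrix MeasureTheory ProbabilityTheory

attribute [local instance] Matrix.frobeniusNormedAddCommGroup Matrix.frobeniusNormedSpace

noncomputable section

/-- The Frobenius inner product `⟨A, B⟩ = trace (Aᵀ * B)` on `ℝ^{d×m}`. -/
def frobInner {d m : ℕ} (A B : Matrix (Fin d) (Fin m) ℝ) : ℝ := (Aᵀ * B).trace

/-- The Frobenius norm `‖A‖_F = √⟨A, A⟩`. -/
def frobNorm {d m : ℕ} (A : Matrix (Fin d) (Fin m) ℝ) : ℝ := Real.sqrt (frobInner A A)

/-- `C` is a curvature bound for a differentiable `F` (with gradient `gradF`) on a convex set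
`D` if `F(W + γ(S − W)) ≤ F(W) + γ⟨S − W, ∇F(W)⟩ + (γ²/2) C` for all `W, S ∈ D`, `γ ∈ [0,1]`. -/
def IsCurvatureBound {d m : ℕ} (F : Matrix (Fin d) (Fin m) ℝ → ℝ)
    (gradF : Matrix (Fin d) (Fin m) ℝ → Matrix (Fin d) (Fin m) ℝ)
    (D : Set (Matrix (Fin d) (Fin m) ℝ)) (C : ℝ) : Prop :=
  ∀ W ∈ D, ∀ S ∈ D, ∀ γ : ℝ, γ ∈ Set.Icc (0 : ℝ) 1 →
    F (W + γ • (S - W)) ≤ F W + γ * frobInner (S - W) (gradF W) + γ ^ 2 / 2 * C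

/-- The singular values of a rectangular real matrix `A`: square roots of the
eigenvalues of `Aᵀ A` (listed with multiplicity, indexed by `Fin m`). -/
def singularValues {d m : ℕ} (A : Matrix (Fin d) (Fin m) ℝ) : Fin m → ℝ := fun i =>
  Real.sqrt ((Matrix.isHermitian_conjTranspose_mul_self A).eigenvalues i)

/-- The trace norm (nuclear norm): the sum of the singular values. -/
def traceNorm {d m : ℕ} (A : Matrix (Fin d) (Fin m) ℝ) : ℝ := ∑ i, singularValues A i

/-- The largest singular value, `σ₁(A) = sup { uᵀ A v : ‖u‖₂ = ‖v‖₂ = 1 }`. -/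
def sigma1 {d m : ℕ} (A : Matrix (Fin d) (Fin m) ℝ) : ℝ :=
  sSup {r : ℝ | ∃ (u : Fin d → ℝ) (v : Fin m → ℝ),
    ∑ i, u i ^ 2 = 1 ∧ ∑ j, v j ^ 2 = 1 ∧ r = ∑ i, ∑ j, u i * A i j * v j}

/-- The second-largest singular value (when `σ₁` has multiplicity 1): the largest
singular value strictly below `σ₁`. -/
def sigma2 {d m : ℕ} (A : Matrix (Fin d) (Fin m) ℝ) : ℝ :=
  sSup {r : ℝ | (∃ i, singularValues A i = r) ∧ r < sigma1 A}

/-- The Euclidean norm on `ℝ^k`. -/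
def enorm2 {k : ℕ} (v : Fin k → ℝ) : ℝ := Real.sqrt (∑ i, v i ^ 2)

/-- Normalization of a vector in the Euclidean norm. -/
def normalize' {k : ℕ} (v : Fin k → ℝ) : Fin k → ℝ := (enorm2 v)⁻¹ • v

/-- Power method iterates: `b₀ = b`, `b_{k+1} = A b_k / ‖A b_k‖₂`. -/
def powerIter {k : ℕ} (A : Matrix (Fin k) (Fin k) ℝ) (b : Fin k → ℝ) : ℕ → Fin k → ℝ
  | 0 => b
  | n + 1 => normalize' (A.mulVec (powerIter A b n))

/-- Rayleigh quotient `vᵀ A v`. -/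
def rayleigh {k : ℕ} (A : Matrix (Fin k) (Fin k) ℝ) (v : Fin k → ℝ) : ℝ :=
  ∑ i, v i * A.mulVec v i

/-- Alternating power iterations producing `v_k`:
`u_{k+1} = A v_k / ‖A v_k‖₂`, `v_{k+1} = Aᵀ u_{k+1} / ‖Aᵀ u_{k+1}‖₂`. -/
def altIter {d m : ℕ} (A : Matrix (Fin d) (Fin m) ℝ) (v0 : Fin m → ℝ) : ℕ → Fin m → ℝ
  | 0 => v0
  | k + 1 => normalize' (Aᵀ.mulVec (normalize' (A.mulVec (altIter A v0 k))))

instance matrixMeasurableSpace {d m : ℕ} : MeasurableSpace (Matrix (Fin d) (Fin m) ℝ) :=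
  inferInstanceAs (MeasurableSpace (Fin d → Fin m → ℝ))

/-!
The curvature bound gives `F(W^{t+1}) ≤ F(W^t) + γ_t ⟨Ŝ^t − W^t, ∇F(W^t)⟩ + γ_t² C_F / 2`.
Since `∇F(W^t)` is `σ(W^t)`-measurable, in expectation `Ŝ^t` may be replaced by
`E[Ŝ^t | W^t]`; the oracle bound, the minimum over `D` being at most the value at `W*`, and the
gradient inequality of the convex `F` then give
`E⟨Ŝ^t − W^t, ∇F(W^t)⟩ ≤ F(W*) − E F(W^t) + δ γ_t C_F / 2`. So `h_t = E F(W^t) − F(W*)`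
satisfies `h_{t+1} ≤ (1 − γ_t) h_t + γ_t² (1 + δ) C_F / 2`, and with `γ_t = 2/(t+2)` induction
gives `h_t ≤ 2 (1 + δ) C_F / (t+2)` for `t ≥ 1`.
-/

open Set Metric

section ConvexGradient

variable {E : Type*} [NormedAddCommGroup E] [NormedSpace ℝ E] {f : E → ℝ} {x : E}

theorem ConvexOn.add_fderiv_sub_le (hf : ConvexOn ℝ univ f) (hfx : DifferentiableAt ℝ f x)
    (y : E) : f x + fderiv ℝ f x (y - x) ≤ f y := by
  have hline : HasDerivAt (f ∘ (AffineMap.lineMap x y : ℝ → E)) (fderiv ℝ f x (y - x)) 0 :=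
    hfx.hasFDerivAt.comp_hasDerivAt_of_eq (0 : ℝ) AffineMap.hasDerivAt_lineMap
      (AffineMap.lineMap_apply_zero x y).symm
  have hslope := (hf.comp_affineMap (AffineMap.lineMap x y)).le_slope_of_hasDerivAt
    (mem_univ 0) (mem_univ 1) one_pos hline
  simp only [slope_def_field, Function.comp_apply, AffineMap.lineMap_apply_one,
    AffineMap.lineMap_apply_zero, sub_zero, div_one] at hslope
  linarith

theorem ConvexOn.norm_fderiv_le_of_abs_le (hf : ConvexOn ℝ univ f)
    (hfx : DifferentiableAt ℝ f x) {M : ℝ} (hM : ∀ y ∈ closedBall x 1, |f y| ≤ M) :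
    ‖fderiv ℝ f x‖ ≤ 2 * M := by
  have hfx_le := abs_le.1 (hM x (mem_closedBall_self zero_le_one))
  have hunit : ∀ v : E, ‖v‖ = 1 → fderiv ℝ f x v ≤ 2 * M := by
    intro v hv
    have hfxv_le := abs_le.1 (hM (x + v) (by simp [hv]))
    have := hf.add_fderiv_sub_le hfx (x + v)
    rw [add_sub_cancel_left] at this
    linarith
  refine ContinuousLinearMap.opNorm_le_of_unit_norm (by linarith) fun v hv => ?_
  have hneg := hunit (-v) (by rwa [norm_neg])
  rw [map_neg] at hneg
  exact abs_le.2 ⟨by linarith, hunit v hv⟩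

theorem ConvexOn.exists_forall_norm_fderiv_le [ProperSpace E] (hf : ConvexOn ℝ univ f)
    (hfd : Differentiable ℝ f) {K : Set E} (hK : IsCompact K) :
    ∃ L, ∀ x ∈ K, ‖fderiv ℝ f x‖ ≤ L := by
  obtain ⟨M, hM⟩ := (hK.cthickening (r := 1)).exists_bound_of_continuousOn
    hfd.continuous.continuousOn
  exact ⟨2 * M, fun x hx => hf.norm_fderiv_le_of_abs_le (hfd x) fun y hy =>
    hM y (closedBall_subset_cthickening hx 1 hy)⟩

theorem ConvexOn.fderiv_sub_le_of_le_sInf (hf : ConvexOn ℝ univ f) {D : Set E} {v w : E}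
    (hfx : DifferentiableAt ℝ f x) (hD : IsCompact D) (hw : w ∈ D) {ε : ℝ}
    (hv : fderiv ℝ f x v ≤ sInf (fderiv ℝ f x '' D) + ε) :
    fderiv ℝ f x (v - x) ≤ f w - f x + ε := by
  have hmin : sInf (fderiv ℝ f x '' D) ≤ fderiv ℝ f x w :=
    csInf_le (hD.image (fderiv ℝ f x).continuous).bddBelow (mem_image_of_mem _ hw)
  have hconv := hf.add_fderiv_sub_le hfx w
  rw [map_sub] at hconv ⊢
  linarith

end ConvexGradient

theorem integrable_comp_of_forall_mem_isCompact {Ω E E' : Type*} [MeasurableSpace Ω]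
    {μ : Measure Ω} [IsFiniteMeasure μ] [TopologicalSpace E] [MeasurableSpace E]
    [OpensMeasurableSpace E] [NormedAddCommGroup E'] [MeasurableSpace E'] [BorelSpace E']
    [SecondCountableTopology E'] {g : E → E'} (hg : Continuous g) {K : Set E} (hK : IsCompact K)
    {X : Ω → E} (hX : Measurable X) (hXK : ∀ ω, X ω ∈ K) : Integrable (fun ω => g (X ω)) μ := by
  obtain ⟨C, hC⟩ := (hK.image hg).isBounded.exists_norm_le
  exact Integrable.of_bound (hg.measurable.comp hX).aestronglyMeasurable C
    (ae_of_all _ fun ω => hC _ (mem_image_of_mem g (hXK ω)))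

theorem integral_bilin_condExp_of_stronglyMeasurable_right {Ω E F G : Type*}
    [NormedAddCommGroup E] [NormedSpace ℝ E] [NormedAddCommGroup F] [NormedSpace ℝ F]
    [CompleteSpace F] [NormedAddCommGroup G] [NormedSpace ℝ G] [CompleteSpace G]
    {m mΩ : MeasurableSpace Ω} {μ : Measure Ω} [IsFiniteMeasure μ] (hm : m ≤ mΩ)
    (B : F →L[ℝ] E →L[ℝ] G) {f : Ω → F} {g : Ω → E} (hf : Integrable f μ)
    (hg : StronglyMeasurable[m] g) {C : ℝ} (hgC : ∀ ω, ‖g ω‖ ≤ C) :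
    ∫ ω, B (μ[f|m] ω) (g ω) ∂μ = ∫ ω, B (f ω) (g ω) ∂μ := by
  have hfg : Integrable (fun ω => B (f ω) (g ω)) μ :=
    B.integrable_of_bilin_of_bdd_right C hf (hg.mono hm).aestronglyMeasurable (ae_of_all _ hgC)
  calc ∫ ω, B (μ[f|m] ω) (g ω) ∂μ = ∫ ω, (μ[fun ω => B (f ω) (g ω)|m]) ω ∂μ :=
        (integral_congr_ae (condExp_bilin_of_stronglyMeasurable_right B hg hfg hf)).symm
    _ = ∫ ω, B (f ω) (g ω) ∂μ := integral_condExp hm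

theorem le_two_mul_div_of_frankWolfe_recursion {h : ℕ → ℝ} {c : ℝ} (hc : 0 ≤ c)
    (hstep : ∀ t : ℕ,
      h (t + 1) ≤ (1 - 2 / ((t : ℝ) + 2)) * h t + (2 / ((t : ℝ) + 2)) ^ 2 / 2 * c) :
    ∀ t : ℕ, 1 ≤ t → h t ≤ 2 * c / ((t : ℝ) + 2) := by
  intro t ht
  induction t, ht using Nat.le_induction with
  | base => linarith [hstep 0]
  | succ n hn ih =>
    have hcoef : 1 - 2 / ((n : ℝ) + 2) = n / (n + 2) := by field_simp; ring
    have hstep_n := hstep n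
    rw [hcoef] at hstep_n
    calc h (n + 1) ≤ n / (n + 2) * (2 * c / (n + 2)) + (2 / ((n : ℝ) + 2)) ^ 2 / 2 * c := by
          nlinarith [mul_le_mul_of_nonneg_left ih (by positivity : (0 : ℝ) ≤ n / (n + 2))]
      _ = 2 * c * (n + 1) / (n + 2) ^ 2 := by field_simp
      _ ≤ 2 * c / ((n + 1 : ℕ) + 2) := by
          push_cast
          rw [div_le_div_iff₀ (by positivity) (by positivity)]
          nlinarith [mul_nonneg hc (by positivity : (0 : ℝ) ≤ n + 1)]

-- The Frobenius topology is the product topology, so `matrixMeasurableSpace` is its Borel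
-- σ-algebra. The topology is named explicitly: instance search would otherwise pick the
-- (defeq, but syntactically different) product topology `instTopologicalSpaceMatrix`.
instance Matrix.frobeniusBorelSpace {d m : ℕ} :
    @BorelSpace (Matrix (Fin d) (Fin m) ℝ) PseudoMetricSpace.toUniformSpace.toTopologicalSpace _ :=
  inferInstanceAs (BorelSpace (Fin d → Fin m → ℝ))

theorem frobInner_comm {d m : ℕ} (A B : Matrix (Fin d) (Fin m) ℝ) :
    frobInner A B = frobInner B A := by
  rw [frobInner, frobInner, ← Matrix.trace_transpose, Matrix.transpose_mul,
    Matrix.transpose_transpose]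

section FrankWolfe

variable {E : Type*} [NormedAddCommGroup E] [NormedSpace ℝ E] [FiniteDimensional ℝ E]
  [MeasurableSpace E] [BorelSpace E] {f : E → ℝ} {D : Set E}
  {Ω : Type*} [MeasurableSpace Ω] {P : Measure Ω} [IsProbabilityMeasure P] {X S : Ω → E}

theorem ConvexOn.integral_fderiv_sub_le (hf : ConvexOn ℝ univ f) (hfd : Differentiable ℝ f)
    (hD : IsCompact D) (hX : Measurable X) (hS : Measurable S) (hXD : ∀ ω, X ω ∈ D)
    (hSD : ∀ ω, S ω ∈ D) {w : E} (hw : w ∈ D) {ε : ℝ}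
    (horacle : ∀ᵐ ω ∂P, fderiv ℝ f (X ω) ((P[S | MeasurableSpace.comap X ‹_›]) ω)
      ≤ sInf (fderiv ℝ f (X ω) '' D) + ε) :
    ∫ ω, fderiv ℝ f (X ω) (S ω - X ω) ∂P ≤ f w - ∫ ω, f (X ω) ∂P + ε := by
  obtain ⟨L, hL⟩ := hf.exists_forall_norm_fderiv_le hfd hD
  have hG : StronglyMeasurable[MeasurableSpace.comap X ‹_›] fun ω => fderiv ℝ f (X ω) :=
    ((measurable_fderiv ℝ f).comp (comap_measurable X)).stronglyMeasurable
  have hGL : ∀ ω, ‖fderiv ℝ f (X ω)‖ ≤ L := fun ω => hL _ (hXD ω)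
  have hintG : ∀ Y : Ω → E, Integrable Y P → Integrable (fun ω => fderiv ℝ f (X ω) (Y ω)) P :=
    fun Y hY => (ContinuousLinearMap.apply ℝ ℝ).integrable_of_bilin_of_bdd_right L hY
      (hG.mono hX.comap_le).aestronglyMeasurable (ae_of_all _ hGL)
  have hSint : Integrable S P := integrable_comp_of_forall_mem_isCompact continuous_id hD hS hSD
  have hXint : Integrable X P := integrable_comp_of_forall_mem_isCompact continuous_id hD hX hXD
  have hfXint : Integrable (fun ω => f (X ω)) P :=
    integrable_comp_of_forall_mem_isCompact hfd.continuous hD hX hXD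
  have hpull : ∫ ω, fderiv ℝ f (X ω) ((P[S | MeasurableSpace.comap X ‹_›]) ω) ∂P
      = ∫ ω, fderiv ℝ f (X ω) (S ω) ∂P :=
    integral_bilin_condExp_of_stronglyMeasurable_right hX.comap_le
      (ContinuousLinearMap.apply ℝ ℝ) hSint hG hGL
  calc ∫ ω, fderiv ℝ f (X ω) (S ω - X ω) ∂P
      = ∫ ω, fderiv ℝ f (X ω) ((P[S | MeasurableSpace.comap X ‹_›]) ω - X ω) ∂P := by
        simp only [map_sub]
        rw [integral_sub (hintG S hSint) (hintG X hXint),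
          integral_sub (hintG _ integrable_condExp) (hintG X hXint), hpull]
    _ ≤ ∫ ω, (f w - f (X ω) + ε) ∂P := by
        refine integral_mono_ae (hintG _ (integrable_condExp.sub hXint))
          (((integrable_const _).sub hfXint).add (integrable_const _)) ?_
        filter_upwards [horacle] with ω hω
        exact hf.fderiv_sub_le_of_le_sInf (hfd _) hD hw hω
    _ = f w - ∫ ω, f (X ω) ∂P + ε := by
        rw [integral_add ?_ (integrable_const _), integral_sub (integrable_const _) hfXint]
        · simp
        · exact (integrable_const _).sub hfXint

theorem ConvexOn.integral_sub_le_of_frankWolfe_step (hf : ConvexOn ℝ univ f)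
    (hfd : Differentiable ℝ f) (hD : IsCompact D) {C δ : ℝ}
    (hcurv : ∀ x ∈ D, ∀ s ∈ D, ∀ γ ∈ Icc (0 : ℝ) 1,
      f (x + γ • (s - x)) ≤ f x + γ * fderiv ℝ f x (s - x) + γ ^ 2 / 2 * C)
    {Y : Ω → E} (hX : Measurable X) (hY : Measurable Y) (hS : Measurable S)
    (hXD : ∀ ω, X ω ∈ D) (hYD : ∀ ω, Y ω ∈ D) (hSD : ∀ ω, S ω ∈ D)
    {γ : ℝ} (hγ : γ ∈ Icc (0 : ℝ) 1) (hYX : ∀ ω, Y ω = X ω + γ • (S ω - X ω))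
    (horacle : ∀ᵐ ω ∂P, fderiv ℝ f (X ω) ((P[S | MeasurableSpace.comap X ‹_›]) ω)
      ≤ sInf (fderiv ℝ f (X ω) '' D) + 1 / 2 * δ * γ * C)
    {w : E} (hw : w ∈ D) :
    ∫ ω, f (Y ω) ∂P - f w ≤ (1 - γ) * (∫ ω, f (X ω) ∂P - f w) + γ ^ 2 / 2 * ((1 + δ) * C) := by
  obtain ⟨L, hL⟩ := hf.exists_forall_norm_fderiv_le hfd hD
  have hfXint : Integrable (fun ω => f (X ω)) P :=
    integrable_comp_of_forall_mem_isCompact hfd.continuous hD hX hXD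
  have hfYint : Integrable (fun ω => f (Y ω)) P :=
    integrable_comp_of_forall_mem_isCompact hfd.continuous hD hY hYD
  have hgap_int : Integrable (fun ω => fderiv ℝ f (X ω) (S ω - X ω)) P :=
    (ContinuousLinearMap.apply ℝ ℝ).integrable_of_bilin_of_bdd_right L
      ((integrable_comp_of_forall_mem_isCompact continuous_id hD hS hSD).sub
        (integrable_comp_of_forall_mem_isCompact continuous_id hD hX hXD))
      ((measurable_fderiv ℝ f).comp hX).aestronglyMeasurable
      (ae_of_all _ fun ω => hL _ (hXD ω))
  have hdescent : ∫ ω, f (Y ω) ∂P ≤ ∫ ω, f (X ω) ∂P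
      + γ * ∫ ω, fderiv ℝ f (X ω) (S ω - X ω) ∂P + γ ^ 2 / 2 * C := by
    calc ∫ ω, f (Y ω) ∂P
        ≤ ∫ ω, (f (X ω) + γ * fderiv ℝ f (X ω) (S ω - X ω) + γ ^ 2 / 2 * C) ∂P :=
          integral_mono hfYint ((hfXint.add (hgap_int.const_mul γ)).add (integrable_const _))
            fun ω => hYX ω ▸ hcurv _ (hXD ω) _ (hSD ω) γ hγ
      _ = _ := by
          rw [integral_add ?_ (integrable_const _), integral_add hfXint (hgap_int.const_mul γ),
            integral_const_mul]
          · simp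
          · exact hfXint.add (hgap_int.const_mul γ)
  have hgap := hf.integral_fderiv_sub_le hfd hD hX hS hXD hSD hw horacle
  nlinarith [mul_le_mul_of_nonneg_left hgap hγ.1]

end FrankWolfe

theorem frank_wolfe_approx_oracle_convergence_in_expectation_general {d m : ℕ}
    (D : Set (Matrix (Fin d) (Fin m) ℝ))
    (hDcp : IsCompact D)
    (F : Matrix (Fin d) (Fin m) ℝ → ℝ)
    (gradF : Matrix (Fin d) (Fin m) ℝ → Matrix (Fin d) (Fin m) ℝ)
    (hFconv : ConvexOn ℝ Set.univ F)
    (hFdiff : Differentiable ℝ F)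
    (hgrad : ∀ W Δ, fderiv ℝ F W Δ = frobInner (gradF W) Δ)
    (C_F : ℝ) (hC : 0 ≤ C_F) (hcurv : IsCurvatureBound F gradF D C_F)
    (δ : ℝ) (hδ : 0 ≤ δ)
    {Ω : Type} [MeasurableSpace Ω] (P : Measure Ω) [IsProbabilityMeasure P]
    (W Shat : ℕ → Ω → Matrix (Fin d) (Fin m) ℝ)
    (hWmeas : ∀ t, Measurable (W t)) (hShatmeas : ∀ t, Measurable (Shat t))
    (hWD : ∀ t ω, W t ω ∈ D) (hShatD : ∀ t ω, Shat t ω ∈ D)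
    (hrec : ∀ (t : ℕ) (ω : Ω), W (t + 1) ω =
      W t ω + (2 / ((t : ℝ) + 2)) • (Shat t ω - W t ω))
    (horacle : ∀ t : ℕ, ∀ᵐ ω ∂P,
      frobInner ((P[Shat t | MeasurableSpace.comap (W t) matrixMeasurableSpace]) ω)
          (gradF (W t ω))
        ≤ sInf ((fun S => frobInner S (gradF (W t ω))) '' D)
            + 1 / 2 * δ * (2 / ((t : ℝ) + 2)) * C_F)
    (Wstar : Matrix (Fin d) (Fin m) ℝ) (hWstarD : Wstar ∈ D) :
    ∀ t : ℕ, 1 ≤ t →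
      (∫ ω, F (W t ω) ∂P) - F Wstar ≤ 2 * C_F / ((t : ℝ) + 2) * (1 + δ) := by
  have hpair : ∀ V S, frobInner S (gradF V) = fderiv ℝ F V S := fun V S => by
    rw [hgrad, frobInner_comm]
  have hpair_fun : ∀ V, (fun S => frobInner S (gradF V)) = fderiv ℝ F V := fun V =>
    funext (hpair V)
  have hcurv' : ∀ x ∈ D, ∀ s ∈ D, ∀ γ ∈ Icc (0 : ℝ) 1,
      F (x + γ • (s - x)) ≤ F x + γ * fderiv ℝ F x (s - x) + γ ^ 2 / 2 * C_F := by
    intro x hx s hs γ hγ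
    rw [← hpair]
    exact hcurv x hx s hs γ hγ
  have hγ : ∀ t : ℕ, 2 / ((t : ℝ) + 2) ∈ Icc (0 : ℝ) 1 := fun t =>
    ⟨by positivity, (div_le_one (by positivity)).2 (by linarith [t.cast_nonneg (α := ℝ)])⟩
  have hstep := fun t => hFconv.integral_sub_le_of_frankWolfe_step hFdiff hDcp hcurv'
    (hWmeas t) (hWmeas (t + 1)) (hShatmeas t) (hWD t) (hWD (t + 1)) (hShatD t) (hγ t) (hrec t)
    ((horacle t).mono fun ω hω => by rwa [hpair_fun, hpair] at hω) hWstarD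
  intro t ht
  calc (∫ ω, F (W t ω) ∂P) - F Wstar ≤ 2 * ((1 + δ) * C_F) / ((t : ℝ) + 2) :=
        le_two_mul_div_of_frankWolfe_recursion
          (h := fun t => (∫ ω, F (W t ω) ∂P) - F Wstar) (by positivity) hstep t ht
    _ = 2 * C_F / ((t : ℝ) + 2) * (1 + δ) := by ring

/-- Sublinear convergence in expectation of the Frank–Wolfe algorithm whose
linear subproblem is solved approximately in expectation by a randomized oracle. -/
theorem frank_wolfe_approx_oracle_convergence_in_expectation {d m : ℕ}
    (D : Set (Matrix (Fin d) (Fin m) ℝ))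
    (hDne : D.Nonempty) (hDcp : IsCompact D) (hDcv : Convex ℝ D)
    (F : Matrix (Fin d) (Fin m) ℝ → ℝ)
    (gradF : Matrix (Fin d) (Fin m) ℝ → Matrix (Fin d) (Fin m) ℝ)
    (hFconv : ConvexOn ℝ Set.univ F)
    (hFdiff : Differentiable ℝ F)
    (hgrad : ∀ W Δ, fderiv ℝ F W Δ = frobInner (gradF W) Δ)
    (C_F : ℝ) (hC : 0 ≤ C_F) (hcurv : IsCurvatureBound F gradF D C_F)
    (δ : ℝ) (hδ : 0 ≤ δ)
    {Ω : Type} [MeasurableSpace Ω] (P : Measure Ω) [IsProbabilityMeasure P]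
    (W Shat : ℕ → Ω → Matrix (Fin d) (Fin m) ℝ)
    (hWmeas : ∀ t, Measurable (W t)) (hShatmeas : ∀ t, Measurable (Shat t))
    (W0 : Matrix (Fin d) (Fin m) ℝ) (hW0D : W0 ∈ D) (hW0 : ∀ ω, W 0 ω = W0)
    (hWD : ∀ t ω, W t ω ∈ D) (hShatD : ∀ t ω, Shat t ω ∈ D)
    (hrec : ∀ (t : ℕ) (ω : Ω), W (t + 1) ω =
      W t ω + (2 / ((t : ℝ) + 2)) • (Shat t ω - W t ω))
    (horacle : ∀ t : ℕ, ∀ᵐ ω ∂P,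
      frobInner ((P[Shat t | MeasurableSpace.comap (W t) matrixMeasurableSpace]) ω)
          (gradF (W t ω))
        ≤ sInf ((fun S => frobInner S (gradF (W t ω))) '' D)
            + 1 / 2 * δ * (2 / ((t : ℝ) + 2)) * C_F)
    (Wstar : Matrix (Fin d) (Fin m) ℝ) (hWstarD : Wstar ∈ D)
    (hWstarmin : ∀ V ∈ D, F Wstar ≤ F V) :
    ∀ t : ℕ, 1 ≤ t →
      (∫ ω, F (W t ω) ∂P) - F Wstar ≤ 2 * C_F / ((t : ℝ) + 2) * (1 + δ) :=
  frank_wolfe_approx_oracle_convergence_in_expectation_general D hDcp F gradF hFconv hFdiff hgrad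
    C_F hC hcurv δ hδ P W Shat hWmeas hShatmeas hWD hShatD hrec horacle Wstar hWstarD
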